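/- Let B, D be orthogonal projections on ℂ^N, ψ_1 a unit eigenvector of BDB satisfying Bψ_1 = ψ_1 and BDBψ_1 = σ² ψ_1 with 0 < σ < 1 and ‖Dψ_1‖ = σ. Then the vector f' = (ψ_1 − Dψ_1)/sqrt(2(1+σ)) + sqrt((1+σ)/(2σ²)) Dψ_1 satisfies ‖f'‖₂ = 1 and ‖Df'‖₂² = (1+σ)/2. -/

import Mathlib

/-!
`D` is an orthogonal projection, so `ψ - Dψ ⊥ Dψ`, whence `‖ψ - Dψ‖² = 1 - σ²` by Pythagoras,
and `D` kills `ψ - Dψ` while fixing `Dψ`. Hence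
`‖f'‖² = (1 - σ²) / (2(1 + σ)) + (1 + σ) / (2σ²) · σ² = 1` and
`‖Df'‖² = (1 + σ) / (2σ²) · σ² = (1 + σ) / 2`.
-/

open Matrix

/-- The Euclidean (ℓ²) norm of a vector in ℂ^N. -/
noncomputable def vecEnorm2 {N : ℕ} (x : Fin N → ℂ) : ℝ :=
  ‖(EuclideanSpace.equiv (Fin N) ℂ).symm x‖

section StarProjection

variable {𝕜 E : Type*} [RCLike 𝕜] [NormedAddCommGroup E] [InnerProductSpace 𝕜 E] [CompleteSpace E]
  {P : E →L[𝕜] E}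

theorem IsStarProjection.inner_sub_apply_apply (hP : IsStarProjection P) (x : E) :
    inner 𝕜 (x - P x) (P x) = 0 := by
  have hPP : P (P x) = P x := congr($(hP.isIdempotentElem.eq) x)
  calc inner 𝕜 (x - P x) (P x) = inner 𝕜 (P (x - P x)) x := (hP.isSelfAdjoint.isSymmetric _ _).symm
    _ = 0 := by rw [map_sub, hPP, sub_self, inner_zero_left]

theorem IsStarProjection.norm_sq_smul_sub_apply_add_smul_apply (hP : IsStarProjection P)
    (x : E) (a b : 𝕜) :
    ‖a • (x - P x) + b • P x‖ ^ 2 = ‖a‖ ^ 2 * (‖x‖ ^ 2 - ‖P x‖ ^ 2) + ‖b‖ ^ 2 * ‖P x‖ ^ 2 := by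
  have horth : inner 𝕜 (a • (x - P x)) (b • P x) = 0 := by
    rw [inner_smul_left, inner_smul_right, hP.inner_sub_apply_apply, mul_zero, mul_zero]
  have hpyth : ‖x‖ ^ 2 = ‖x - P x‖ ^ 2 + ‖P x‖ ^ 2 := by
    simpa only [sq, sub_add_cancel] using
      norm_add_sq_eq_norm_sq_add_norm_sq_of_inner_eq_zero _ _ (hP.inner_sub_apply_apply x)
  rw [sq, norm_add_sq_eq_norm_sq_add_norm_sq_of_inner_eq_zero _ _ horth, ← sq, ← sq, norm_smul,
    norm_smul, mul_pow, mul_pow, hpyth, add_sub_cancel_right]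

theorem IsStarProjection.apply_smul_sub_apply_add_smul_apply (hP : IsStarProjection P)
    (x : E) (a b : 𝕜) : P (a • (x - P x) + b • P x) = b • P x := by
  have hPP : P (P x) = P x := congr($(hP.isIdempotentElem.eq) x)
  simp only [map_add, map_smul, map_sub, hPP, sub_self, smul_zero, zero_add]

end StarProjection

theorem Matrix.isStarProjection_toEuclideanCLM {n 𝕜 : Type*} [Fintype n] [DecidableEq n]
    [RCLike 𝕜] {A : Matrix n n 𝕜} (hA : Aᴴ = A ∧ A * A = A) :
    IsStarProjection (toEuclideanCLM (n := n) (𝕜 := 𝕜) A) :=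
  IsStarProjection.map ⟨hA.2, hA.1⟩ _

theorem vecEnorm2_eq_norm_toLp {N : ℕ} (x : Fin N → ℂ) : vecEnorm2 x = ‖WithLp.toLp 2 x‖ := rfl

theorem Complex.norm_ofReal_sqrt_sq {x : ℝ} (hx : 0 ≤ x) : ‖((√x : ℝ) : ℂ)‖ ^ 2 = x := by
  rw [Complex.norm_real, Real.norm_eq_abs, sq_abs, Real.sq_sqrt hx]

theorem stmt16_general (N : ℕ) (D : Matrix (Fin N) (Fin N) ℂ)
    (hD : Dᴴ = D ∧ D * D = D)
    (σ : ℝ) (hσ : 0 < σ)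
    (ψ : Fin N → ℂ) (hψ : vecEnorm2 ψ = 1)
    (hDψ : vecEnorm2 (D.mulVec ψ) = σ)
    (f' : Fin N → ℂ)
    (hf' : f' = ((Real.sqrt (2 * (1 + σ)) : ℂ))⁻¹ • (ψ - D.mulVec ψ) +
        ((Real.sqrt ((1 + σ) / (2 * σ ^ 2)) : ℂ)) • D.mulVec ψ) :
    vecEnorm2 f' = 1 ∧ (vecEnorm2 (D.mulVec f')) ^ 2 = (1 + σ) / 2 := by
  set P := toEuclideanCLM (n := Fin N) (𝕜 := ℂ) D
  have hP : IsStarProjection P := isStarProjection_toEuclideanCLM hD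
  set u := WithLp.toLp 2 ψ
  set a : ℂ := ((√(2 * (1 + σ)) : ℝ) : ℂ)⁻¹
  set b : ℂ := ((√((1 + σ) / (2 * σ ^ 2)) : ℝ) : ℂ)
  have hf'u : WithLp.toLp 2 f' = a • (u - P u) + b • P u := by rw [hf']; rfl
  have hDf'u : WithLp.toLp 2 (D *ᵥ f') = b • P u := by
    rw [← toEuclideanCLM_toLp, hf'u, hP.apply_smul_sub_apply_add_smul_apply]
  have hu : ‖u‖ = 1 := hψ
  have hPu : ‖P u‖ = σ := hDψ
  have ha : ‖a‖ ^ 2 = (2 * (1 + σ))⁻¹ := by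
    rw [norm_inv, inv_pow, Complex.norm_ofReal_sqrt_sq (by positivity)]
  have hb : ‖b‖ ^ 2 = (1 + σ) / (2 * σ ^ 2) := Complex.norm_ofReal_sqrt_sq (by positivity)
  constructor
  · rw [vecEnorm2_eq_norm_toLp, ← pow_eq_one_iff_of_nonneg (norm_nonneg _) two_ne_zero, hf'u,
      hP.norm_sq_smul_sub_apply_add_smul_apply, hu, hPu, ha, hb]
    field_simp
    ring
  · rw [vecEnorm2_eq_norm_toLp, hDf'u, norm_smul, mul_pow, hb, hPu]
    field_simp

theorem stmt16 (N : ℕ) (hN : 0 < N) (B D : Matrix (Fin N) (Fin N) ℂ)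
    (hB : Bᴴ = B ∧ B * B = B) (hD : Dᴴ = D ∧ D * D = D)
    (σ : ℝ) (hσ : 0 < σ) (hσ1 : σ < 1)
    (ψ : Fin N → ℂ) (hψ : vecEnorm2 ψ = 1)
    (hband : B.mulVec ψ = ψ)
    (heig : (B * D * B).mulVec ψ = ((σ : ℂ) ^ 2) • ψ)
    (hDψ : vecEnorm2 (D.mulVec ψ) = σ)
    (f' : Fin N → ℂ)
    (hf' : f' = ((Real.sqrt (2 * (1 + σ)) : ℂ))⁻¹ • (ψ - D.mulVec ψ) +
        ((Real.sqrt ((1 + σ) / (2 * σ ^ 2)) : ℂ)) • D.mulVec ψ) :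
    vecEnorm2 f' = 1 ∧ (vecEnorm2 (D.mulVec f')) ^ 2 = (1 + σ) / 2 :=
  stmt16_general N D hD σ hσ ψ hψ hDψ f' hf'
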